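/- arXiv:2405.02112 — 6 statements merged into one kernel-verified Lean document; each statement's English description precedes it below -/
import Mathlib

section
/- Let p be an odd prime. Then the determinant of the (p-1)×(p-1) matrix whose (i,j) entry (for 1 ≤ i,j ≤ p-1) is the Legendre symbol ((j-i)/p) equals p^((p-3)/2). -/
open Matrix Finset AddChar MulChar

namespace Carlitz

variable (p : ℕ) [Fact p.Prime]

/-- The quadratic character with values in `ℂ`. -/
noncomputable def χ : MulChar (ZMod p) ℂ :=
  (quadraticChar (ZMod p)).ringHomComp (Int.castRingHom ℂ)

lemma hp_prime : p.Prime := Fact.out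

lemma hp_ne_zero : p ≠ 0 := (hp_prime p).ne_zero

noncomputable def ζ : ℂ := Complex.exp (2 * Real.pi * Complex.I / p)

lemma hζ : IsPrimitiveRoot (ζ p) p := Complex.isPrimitiveRoot_exp p (hp_ne_zero p)

lemma hζ_pow : ζ p ^ p = 1 := (hζ p).pow_eq_one

/-- The standard additive character. -/
noncomputable def ψ : AddChar (ZMod p) ℂ :=
  haveI : NeZero p := ⟨hp_ne_zero p⟩
  AddChar.zmodChar p (hζ_pow p)

lemma ψ_prim : (ψ p).IsPrimitive :=
  haveI : NeZero p := ⟨hp_ne_zero p⟩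
  AddChar.zmodChar_primitive_of_primitive_root p (hζ p)

/-- the circulant-plus-ones matrix -/
noncomputable def B : Matrix (ZMod p) (ZMod p) ℂ :=
  Matrix.of fun i j => χ p (j - i) + 1

/-- the Fourier matrix -/
noncomputable def F : Matrix (ZMod p) (ZMod p) ℂ :=
  Matrix.of fun i a => ψ p (i * a)

noncomputable def F' : Matrix (ZMod p) (ZMod p) ℂ :=
  Matrix.of fun a j => ψ p (-(a * j))

noncomputable def lam : ZMod p → ℂ := fun a => ∑ k : ZMod p, (χ p k + 1) * ψ p (k * a)

lemma ringChar_ne_two (hp : p ≠ 2) : ringChar (ZMod p) ≠ 2 := by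
  rw [ZMod.ringChar_zmod_n]; exact hp

lemma χ_ne_one (hp : p ≠ 2) : χ p ≠ 1 :=
  (ringHomComp_ne_one_iff (RingHom.injective_int _)).mpr
    (quadraticChar_ne_one (ringChar_ne_two p hp))

lemma χ_quad : (χ p).IsQuadratic :=
  (quadraticChar_isQuadratic (ZMod p)).comp _

lemma χ_sum_zero (hp : p ≠ 2) : ∑ x : ZMod p, χ p x = 0 := by
  have := quadraticChar_sum_zero (ringChar_ne_two p hp)
  have h2 : ((∑ a : ZMod p, quadraticChar (ZMod p) a : ℤ) : ℂ) = 0 := by rw [this]; simp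
  rw [Int.cast_sum] at h2
  simpa [χ] using h2

lemma B_mul_F : B p * F p = F p * Matrix.diagonal (lam p) := by
  ext i a
  rw [Matrix.mul_apply, Matrix.mul_diagonal]
  simp only [B, F, lam, Matrix.of_apply]
  rw [Finset.mul_sum]
  refine Fintype.sum_equiv (Equiv.subRight i) _ _ fun x => ?_
  simp only [Equiv.subRight_apply]
  have h1 : x = i + (x - i) := by ring
  nth_rewrite 2 [h1]
  rw [show (i + (x - i)) * a = i * a + (x - i) * a from by ring, AddChar.map_add_eq_mul]
  ring

lemma F_mul_F' : F p * F' p = (p : ℂ) • (1 : Matrix (ZMod p) (ZMod p) ℂ) := by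
  classical
  haveI : NeZero p := ⟨hp_ne_zero p⟩
  ext i j
  rw [Matrix.mul_apply]
  have key : ∀ a : ZMod p, F p i a * F' p a j = ψ p (a * (i - j)) := by
    intro a
    simp only [F, F', Matrix.of_apply]
    rw [← AddChar.map_add_eq_mul]
    congr 1; ring
  simp_rw [key]
  rw [AddChar.sum_mulShift _ (ψ_prim p), ZMod.card]
  simp only [Matrix.smul_apply, Matrix.one_apply, sub_eq_zero, smul_eq_mul]
  split_ifs <;> simp

lemma detF_ne_zero : (F p).det ≠ 0 := by
  haveI : NeZero p := ⟨hp_ne_zero p⟩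
  intro h
  have h2 := congrArg Matrix.det (F_mul_F' p)
  rw [Matrix.det_mul, h, zero_mul, Matrix.det_smul, Matrix.det_one, mul_one, ZMod.card] at h2
  exact pow_ne_zero _ (Nat.cast_ne_zero.mpr (hp_ne_zero p)) h2.symm

lemma det_B_eq_prod : (B p).det = ∏ a : ZMod p, lam p a := by
  have h := congrArg Matrix.det (B_mul_F p)
  rw [Matrix.det_mul, Matrix.det_mul, Matrix.det_diagonal, mul_comm ((F p).det)] at h
  exact mul_right_cancel₀ (detF_ne_zero p) h

lemma lam_zero (hp : p ≠ 2) : lam p 0 = p := by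
  haveI : NeZero p := ⟨hp_ne_zero p⟩
  simp only [lam, mul_zero, AddChar.map_zero_eq_one, mul_one]
  rw [Finset.sum_add_distrib, χ_sum_zero p hp, zero_add, Finset.sum_const, Finset.card_univ,
    ZMod.card]
  simp

lemma lam_ne_zero {a : ZMod p} (ha : a ≠ 0) : lam p a = χ p a * gaussSum (χ p) (ψ p) := by
  classical
  haveI : NeZero p := ⟨hp_ne_zero p⟩
  have expand : lam p a = (∑ k, χ p k * ψ p (k * a)) + ∑ k : ZMod p, ψ p (k * a) := by
    simp only [lam, add_mul, one_mul, Finset.sum_add_distrib]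
  rw [expand, AddChar.sum_mulShift _ (ψ_prim p), if_neg ha, Nat.cast_zero, add_zero]
  have hG : (∑ k, χ p k * ψ p (k * a)) = gaussSum (χ p) ((ψ p).mulShift a) := by
    simp only [gaussSum, AddChar.mulShift_apply]
    exact Finset.sum_congr rfl fun k _ => by rw [mul_comm a k]
  rw [hG]
  have hu : IsUnit a := isUnit_iff_ne_zero.mpr ha
  obtain ⟨u, rfl⟩ := hu
  have h1 := gaussSum_mulShift (χ p) (ψ p) u
  have hsq : χ p (u : ZMod p) * χ p (u : ZMod p) = 1 := by
    have := congrArg (fun c => c ((u : ZMod p))) (χ_quad p).sq_eq_one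
    simpa [pow_two, MulChar.one_apply_coe] using this
  calc gaussSum (χ p) ((ψ p).mulShift u)
      = (χ p u * χ p u) * gaussSum (χ p) ((ψ p).mulShift u) := by rw [hsq, one_mul]
    _ = χ p u * gaussSum (χ p) (ψ p) := by rw [mul_assoc, h1]

lemma gauss_sq (hp : p ≠ 2) : gaussSum (χ p) (ψ p) ^ 2 = χ p (-1) * p := by
  haveI : NeZero p := ⟨hp_ne_zero p⟩
  have := gaussSum_sq (χ_ne_one p hp) (χ_quad p) (ψ_prim p)
  rwa [ZMod.card] at this

lemma prod_nonzero_χ : ∏ a ∈ univ \ {(0 : ZMod p)}, χ p a = χ p (-1) := by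
  classical
  have h0 : ∏ a ∈ univ \ {(0 : ZMod p)}, χ p a = ∏ a : {x : ZMod p // x ≠ 0}, χ p a := by
    exact Finset.prod_subtype (univ \ {(0 : ZMod p)})
      (fun x => by simp : ∀ x : ZMod p, x ∈ univ \ {(0 : ZMod p)} ↔ x ≠ 0) (fun x => χ p x)
  have h2 : ∏ a : {x : ZMod p // x ≠ 0}, χ p (a : ZMod p)
      = ∏ u : (ZMod p)ˣ, χ p (u : ZMod p) := by
    refine (Fintype.prod_equiv unitsEquivNeZero _ _ fun u => ?_).symm
    simp [unitsEquivNeZero]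
  rw [h0, h2, ← map_prod]
  congr 1
  have : (∏ u : (ZMod p)ˣ, u) = (-1 : (ZMod p)ˣ) := FiniteField.prod_univ_units_id_eq_neg_one
  calc (∏ u : (ZMod p)ˣ, (u : ZMod p)) = ((∏ u : (ZMod p)ˣ, u : (ZMod p)ˣ) : ZMod p) := by
        rw [← Units.coeHom_apply, map_prod]; rfl
    _ = -1 := by rw [this]; simp

lemma det_B_val (hp : p ≠ 2) : (B p).det = (p : ℂ) ^ ((p + 1) / 2) := by
  classical
  obtain ⟨k, hk⟩ := (hp_prime p).odd_of_ne_two hp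
  haveI : NeZero p := ⟨hp_ne_zero p⟩
  have hcard : (univ \ {(0 : ZMod p)}).card = p - 1 := by
    rw [Finset.card_sdiff_of_subset (by simp), Finset.card_univ, ZMod.card]; simp
  have h1 : (B p).det = lam p 0 * ∏ a ∈ univ \ {(0 : ZMod p)}, lam p a := by
    rw [det_B_eq_prod]
    exact Finset.prod_eq_mul_prod_sdiff_singleton_of_mem (Finset.mem_univ 0) _
  have h2 : ∏ a ∈ univ \ {(0 : ZMod p)}, lam p a
      = (∏ a ∈ univ \ {(0 : ZMod p)}, χ p a) * gaussSum (χ p) (ψ p) ^ (p - 1) := by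
    rw [Finset.prod_congr rfl
      (fun a ha => lam_ne_zero p (by simpa using (Finset.mem_sdiff.mp ha).2))]
    rw [Finset.prod_mul_distrib, Finset.prod_const, hcard]
  have h3 : gaussSum (χ p) (ψ p) ^ (p - 1) = (χ p (-1) * (p : ℂ)) ^ k := by
    rw [← gauss_sq p hp, ← pow_mul]
    congr 1
    omega
  rw [h1, h2, h3, lam_zero p hp, prod_nonzero_χ p, mul_pow]
  have hχ1 : χ p (-1) * χ p (-1) ^ k = 1 := by
    by_cases hsq : IsSquare (-1 : ZMod p)
    · have hq : quadraticChar (ZMod p) (-1) = 1 :=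
        (quadraticChar_one_iff_isSquare (neg_ne_zero.mpr one_ne_zero)).mpr hsq
      have hχ : χ p (-1) = 1 := by
        simp [χ, MulChar.ringHomComp_apply, hq]
      rw [hχ]; simp
    · have hq : quadraticChar (ZMod p) (-1) = -1 :=
        quadraticChar_neg_one_iff_not_isSquare.mpr hsq
      have hχ : χ p (-1) = -1 := by
        simp [χ, MulChar.ringHomComp_apply, hq]
      have h4 : p % 4 = 3 := by
        by_contra h4
        exact hsq ((ZMod.exists_sq_eq_neg_one_iff).mpr h4)
      have hk2 : Even (k + 1) := Nat.even_iff.mpr (by omega)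
      rw [hχ, show ((-1 : ℂ)) * (-1 : ℂ) ^ k = (-1 : ℂ) ^ (k + 1) from by ring]
      exact hk2.neg_one_pow
  rw [show (p + 1) / 2 = k + 1 from by omega]
  calc (p : ℂ) * (χ p (-1) * (χ p (-1) ^ k * (p : ℂ) ^ k))
      = (χ p (-1) * χ p (-1) ^ k) * ((p : ℂ) * (p : ℂ) ^ k) := by ring
    _ = (p : ℂ) ^ (k + 1) := by rw [hχ1, one_mul]; ring


lemma sum_master_right (hp : p ≠ 2) (y : ZMod p) : ∑ x : ZMod p, (χ p (y - x) + 1) = p := by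
  haveI : NeZero p := ⟨hp_ne_zero p⟩
  rw [Finset.sum_add_distrib, Finset.sum_const, Finset.card_univ, ZMod.card]
  have h : ∑ x : ZMod p, χ p (y - x) = ∑ x : ZMod p, χ p x :=
    Fintype.sum_equiv (Equiv.subLeft y) _ _ fun x => rfl
  rw [h, χ_sum_zero p hp]
  simp

lemma sum_master_left (hp : p ≠ 2) (y : ZMod p) : ∑ x : ZMod p, (χ p (x - y) + 1) = p := by
  haveI : NeZero p := ⟨hp_ne_zero p⟩
  rw [Finset.sum_add_distrib, Finset.sum_const, Finset.card_univ, ZMod.card]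
  have h : ∑ x : ZMod p, χ p (x - y) = ∑ x : ZMod p, χ p x :=
    Fintype.sum_equiv (Equiv.subRight y) _ _ fun x => rfl
  rw [h, χ_sum_zero p hp]
  simp

lemma aux_ne (i : Fin (p - 1)) : ((i : ℕ) : ZMod p) ≠ -1 := by
  haveI : NeZero p := ⟨hp_ne_zero p⟩
  intro h
  have h2 : (((i : ℕ) + 1 : ℕ) : ZMod p) = 0 := by push_cast [h]; ring
  rw [ZMod.natCast_eq_zero_iff] at h2
  have h3 := Nat.le_of_dvd (by omega) h2
  have h4 := i.isLt
  have h5 := (hp_prime p).two_le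
  omega

/-- The reindexing equivalence. -/
noncomputable def emap : (Fin (p - 1) ⊕ Unit) ≃ ZMod p :=
  Equiv.ofBijective (Sum.elim (fun i => ((i : ℕ) : ZMod p)) fun _ => -1) <| by
    haveI : NeZero p := ⟨hp_ne_zero p⟩
    rw [Fintype.bijective_iff_injective_and_card]
    constructor
    · rintro (i | ⟨⟩) (j | ⟨⟩) hxy <;>
        simp only [Sum.elim_inl, Sum.elim_inr] at hxy
      · have h1 := congrArg ZMod.val hxy
        rw [ZMod.val_cast_of_lt (by have := i.isLt; omega),
          ZMod.val_cast_of_lt (by have := j.isLt; omega)] at h1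
        exact congrArg Sum.inl (Fin.ext h1)
      · exact absurd hxy (aux_ne p i)
      · exact absurd hxy.symm (aux_ne p j)
      · rfl
    · have := (hp_prime p).two_le
      simp only [Fintype.card_sum, Fintype.card_fin, Fintype.card_unit, ZMod.card]
      omega

lemma emap_inl (i : Fin (p - 1)) : emap p (Sum.inl i) = ((i : ℕ) : ZMod p) := rfl

lemma emap_inr (x : Unit) : emap p (Sum.inr x) = -1 := rfl

noncomputable def Amat : Matrix (Fin (p - 1)) (Fin (p - 1)) ℂ :=
  Matrix.of fun i j => χ p (((j : ℕ) : ZMod p) - ((i : ℕ) : ZMod p)) + 1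

noncomputable def bmat : Matrix (Fin (p - 1)) Unit ℂ :=
  Matrix.of fun i _ => χ p (-1 - ((i : ℕ) : ZMod p)) + 1

noncomputable def cmat : Matrix Unit (Fin (p - 1)) ℂ :=
  Matrix.of fun _ j => χ p (((j : ℕ) : ZMod p) + 1) + 1

noncomputable def dmat : Matrix Unit Unit ℂ := Matrix.of fun _ _ => 1

noncomputable def Mc : Matrix (Fin (p - 1)) (Fin (p - 1)) ℂ :=
  Matrix.of fun i j => χ p (((j : ℕ) : ZMod p) - ((i : ℕ) : ZMod p))

noncomputable def umat : Matrix Unit (Fin (p - 1)) ℂ := Matrix.of fun _ _ => 1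

noncomputable def vmat : Matrix (Fin (p - 1)) Unit ℂ := Matrix.of fun _ _ => 1

lemma B_submatrix : (B p).submatrix (emap p) (emap p)
    = fromBlocks (Amat p) (bmat p) (cmat p) (dmat) := by
  ext x y
  rcases x with i | ⟨⟩ <;> rcases y with j | ⟨⟩
  · rfl
  · rfl
  · show χ p (((j : ℕ) : ZMod p) - (-1)) + 1 = χ p (((j : ℕ) : ZMod p) + 1) + 1
    rw [sub_neg_eq_add]
  · show χ p ((-1 : ZMod p) - (-1)) + 1 = 1
    rw [sub_self, MulChar.map_nonunit _ not_isUnit_zero, zero_add]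

lemma key1 (hp : p ≠ 2) : umat p * Amat p + cmat p = (p : ℂ) • umat p := by
  ext x j
  have hsum : ∑ k : Fin (p - 1) ⊕ Unit,
      (χ p (((j : ℕ) : ZMod p) - emap p k) + 1) = p := by
    rw [Equiv.sum_comp (emap p) (fun x => χ p (((j : ℕ) : ZMod p) - x) + 1)]
    exact sum_master_right p hp _
  rw [Fintype.sum_sum_type] at hsum
  simp only [emap_inl, emap_inr, sub_neg_eq_add, Finset.sum_const, Finset.card_univ,
    Fintype.card_unit, one_smul] at hsum
  simp only [Matrix.add_apply, Matrix.mul_apply, Matrix.smul_apply, umat, Amat, cmat,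
    Matrix.of_apply, one_mul, smul_eq_mul, mul_one]
  exact hsum

lemma key5 (hp : p ≠ 2) : cmat p * vmat p + dmat = (p : ℂ) • (1 : Matrix Unit Unit ℂ) := by
  ext x y
  have hsum : ∑ k : Fin (p - 1) ⊕ Unit, (χ p (emap p k + 1) + 1) = p := by
    rw [Equiv.sum_comp (emap p) (fun x => χ p (x + 1) + 1)]
    have h := sum_master_left p hp (-1 : ZMod p)
    simpa [sub_neg_eq_add] using h
  rw [Fintype.sum_sum_type] at hsum
  have hz : χ p (0 : ZMod p) = 0 := MulChar.map_nonunit _ not_isUnit_zero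
  simp only [emap_inl, emap_inr, neg_add_cancel, Finset.sum_const, Finset.card_univ,
    Fintype.card_unit, one_smul, hz, zero_add] at hsum
  simp only [Matrix.add_apply, Matrix.mul_apply, Matrix.smul_apply, cmat, vmat, dmat,
    Matrix.of_apply, mul_one, Matrix.one_apply_eq, smul_eq_mul]
  exact hsum

lemma key3 (hp : p ≠ 2) : Amat p * vmat p + bmat p = (p : ℂ) • vmat p := by
  ext i y
  have hsum : ∑ k : Fin (p - 1) ⊕ Unit,
      (χ p (emap p k - ((i : ℕ) : ZMod p)) + 1) = p := by
    rw [Equiv.sum_comp (emap p) (fun x => χ p (x - ((i : ℕ) : ZMod p)) + 1)]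
    exact sum_master_left p hp _
  rw [Fintype.sum_sum_type] at hsum
  simp only [emap_inl, emap_inr, Finset.sum_const, Finset.card_univ,
    Fintype.card_unit, one_smul] at hsum
  simp only [Matrix.add_apply, Matrix.mul_apply, Matrix.smul_apply, Amat, vmat, bmat,
    Matrix.of_apply, mul_one, smul_eq_mul]
  rw [show (-1 : ZMod p) - ((i : ℕ) : ZMod p) = -1 - ((i : ℕ) : ZMod p) from rfl] at hsum
  exact hsum

lemma key4 : umat p * vmat p = ((p : ℂ) - 1) • (1 : Matrix Unit Unit ℂ) := by
  have h2 := (hp_prime p).two_le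
  ext x y
  simp only [Matrix.mul_apply, umat, vmat, Matrix.of_apply, one_mul, Finset.sum_const,
    Finset.card_univ, Fintype.card_fin, nsmul_eq_mul, mul_one, Matrix.smul_apply,
    Matrix.one_apply_eq, smul_eq_mul]
  rw [Nat.cast_sub (by omega)]
  simp

lemma Amat_sub : Amat p + (-1 : ℂ) • (vmat p * umat p) = Mc p := by
  ext i j
  simp only [Matrix.add_apply, Matrix.smul_apply, Matrix.mul_apply, Amat, vmat, umat, Mc,
    Matrix.of_apply, one_mul, Finset.sum_const, Finset.card_univ, Fintype.card_unit, one_smul,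
    smul_eq_mul]
  ring

lemma det_Mc (hp : p ≠ 2) : (Mc p).det = (p : ℂ) ^ ((p - 3) / 2) := by
  classical
  have h2 := (hp_prime p).two_le
  have hpnz : (p : ℂ) ≠ 0 := Nat.cast_ne_zero.mpr (hp_ne_zero p)
  have hprod : (fromBlocks 1 (-(p : ℂ)⁻¹ • vmat p) 0 1)
        * ((fromBlocks 1 0 (umat p) 1)
          * ((B p).submatrix (emap p) (emap p) * fromBlocks 1 (vmat p) 0 1))
      = fromBlocks (Mc p) 0 ((p : ℂ) • umat p) ((p : ℂ) ^ 2 • 1) := by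
    rw [B_submatrix p, fromBlocks_multiply, fromBlocks_multiply, fromBlocks_multiply]
    simp only [Matrix.mul_one, Matrix.mul_zero, add_zero, Matrix.one_mul,
      Matrix.zero_mul, zero_add]
    have hbr : umat p * (Amat p * vmat p + bmat p) + (cmat p * vmat p + dmat)
        = (p : ℂ) ^ 2 • (1 : Matrix Unit Unit ℂ) := by
      rw [key3 p hp, key5 p hp, Matrix.mul_smul, key4 p, smul_smul]
      rw [← add_smul]
      congr 1
      ring
    have hE1 : Amat p + -(p : ℂ)⁻¹ • vmat p * (umat p * Amat p + cmat p) = Mc p := by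
      rw [key1 p hp, Matrix.smul_mul, Matrix.mul_smul, smul_smul,
        show -(p : ℂ)⁻¹ * (p : ℂ) = -1 by field_simp]
      exact Amat_sub p
    have hE2 : Amat p * vmat p + bmat p
        + -(p : ℂ)⁻¹ • vmat p * (umat p * (Amat p * vmat p + bmat p) + (cmat p * vmat p + dmat))
        = 0 := by
      rw [hbr, key3 p hp, Matrix.smul_mul, Matrix.mul_smul, Matrix.mul_one, smul_smul,
        ← add_smul, show (p : ℂ) + -(p : ℂ)⁻¹ * (p : ℂ) ^ 2 = 0 from by field_simp; ring,
        zero_smul]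
    rw [hE1, hE2, key1 p hp, hbr]
  have hdet := congrArg Matrix.det hprod
  simp only [Matrix.det_mul, Matrix.det_fromBlocks_zero₂₁, Matrix.det_fromBlocks_zero₁₂,
    Matrix.det_submatrix_equiv_self, Matrix.det_one, Matrix.det_smul, Fintype.card_unit,
    pow_one, one_mul, mul_one] at hdet
  rw [det_B_val p hp] at hdet
  have hpow : (p : ℂ) ^ ((p + 1) / 2) = (p : ℂ) ^ ((p - 3) / 2) * (p : ℂ) ^ 2 := by
    rw [← pow_add]
    congr 1
    omega
  rw [hpow] at hdet
  exact (mul_right_cancel₀ (pow_ne_zero 2 hpnz) hdet).symm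

end Carlitz

open Carlitz in
theorem carlitz_det (p : ℕ) [Fact p.Prime] (hp : p ≠ 2) :
    (Matrix.of fun i j : Fin (p - 1) =>
        legendreSym p ((j : ℤ) - (i : ℤ))).det = (p : ℤ) ^ ((p - 3) / 2) := by
  have hmap := RingHom.map_det (Int.castRingHom ℂ)
      (Matrix.of fun i j : Fin (p - 1) => legendreSym p ((j : ℤ) - (i : ℤ)))
  have heq : (Matrix.of fun i j : Fin (p - 1) => legendreSym p ((j : ℤ) - (i : ℤ))).map
      (Int.castRingHom ℂ) = Mc p := by
    ext i j
    show ((legendreSym p ((j : ℤ) - (i : ℤ)) : ℤ) : ℂ)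
        = χ p (((j : ℕ) : ZMod p) - ((i : ℕ) : ZMod p))
    rw [legendreSym]
    show ((quadraticChar (ZMod p) ((((j : ℤ) - (i : ℤ)) : ℤ) : ZMod p) : ℤ) : ℂ)
        = ((quadraticChar (ZMod p) (((j : ℕ) : ZMod p) - ((i : ℕ) : ZMod p)) : ℤ) : ℂ)
    congr 2
    push_cast
    ring
  have hfinal : ((Matrix.of fun i j : Fin (p - 1) =>
      legendreSym p ((j : ℤ) - (i : ℤ))).det : ℂ) = (p : ℂ) ^ ((p - 3) / 2) := by
    rw [show ((Matrix.of fun i j : Fin (p - 1) => legendreSym p ((j : ℤ) - (i : ℤ))).det : ℂ)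
        = (Int.castRingHom ℂ) (Matrix.of fun i j : Fin (p - 1) =>
            legendreSym p ((j : ℤ) - (i : ℤ))).det from rfl,
      hmap, RingHom.mapMatrix_apply, heq, det_Mc p hp]
  apply Int.cast_injective (α := ℂ)
  rw [hfinal]
  push_cast
  ring
end

section
/- Let p be a prime with p ≡ 3 (mod 4), let n = (p-1)/2, and let C be the (n+1)×(n+1) matrix with entries C[i][j] = ((j-i)/p) for 0 ≤ i,j ≤ n. Let u be the all-ones column vector of length n+1. Then uᵀ · adj(C) · u = 0, i.e., the sum of all cofactors of C is zero. -/
/-! For `p ≡ 3 (mod 4)` the symbol `(·/p)` is odd, so `C` is skew-symmetric; its size `(p + 1) / 2`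
is even, and the adjugate of an even-sized skew-symmetric matrix is again skew-symmetric
(`adj(-A) = (-1)^(m-1) adj A`). The entries of a skew-symmetric matrix over `ℤ` sum to zero. -/

open Matrix

theorem legendreSym_neg_of_mod_four_eq_three {p : ℕ} [Fact p.Prime] (hp : p % 4 = 3) (a : ℤ) :
    legendreSym p (-a) = -legendreSym p a := by
  have hneg_one : legendreSym p (-1) = -1 := by
    rw [legendreSym.at_neg_one (by omega), ZMod.χ₄_nat_three_mod_four hp]
  rw [neg_eq_neg_one_mul, legendreSym.mul, hneg_one, neg_one_mul]

namespace Matrix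

variable {n α : Type*} [Fintype n]

theorem adjugate_transpose_eq_neg_of_transpose_eq_neg [DecidableEq n] [CommRing α]
    {A : Matrix n n α} (hA : Aᵀ = -A) (hn : Even (Fintype.card n)) :
    (adjugate A)ᵀ = -adjugate A := by
  rcases (Fintype.card n).eq_zero_or_pos with hcard | hcard
  · have : IsEmpty n := Fintype.card_eq_zero_iff.mp hcard
    exact Subsingleton.elim _ _
  have hodd : Odd (Fintype.card n - 1) := Nat.Even.sub_odd hcard hn odd_one
  rw [adjugate_transpose, hA, ← neg_one_smul α A, adjugate_smul, hodd.neg_one_pow, neg_one_smul]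

theorem sum_entries_eq_zero_of_transpose_eq_neg [AddCommGroup α] [IsAddTorsionFree α]
    {A : Matrix n n α} (hA : Aᵀ = -A) : ∑ i, ∑ j, A i j = 0 := by
  refine self_eq_neg.mp ?_
  calc ∑ i, ∑ j, A i j = ∑ j, ∑ i, Aᵀ j i := Finset.sum_comm
    _ = ∑ j, ∑ i, (-A) j i := by rw [hA]
    _ = -∑ i, ∑ j, A i j := by simp only [neg_apply, Finset.sum_neg_distrib]

end Matrix

theorem cofactor_sum_zero (p : ℕ) [Fact p.Prime] (hp : p % 4 = 3) :
    let n := (p - 1) / 2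
    let C : Matrix (Fin (n + 1)) (Fin (n + 1)) ℤ :=
      Matrix.of fun i j => legendreSym p ((j : ℤ) - (i : ℤ))
    ∑ k : Fin (n + 1), ∑ l : Fin (n + 1), adjugate C k l = 0 := by
  intro n C
  have hC : Cᵀ = -C := by
    ext i j
    simp only [C, transpose_apply, neg_apply, of_apply]
    rw [← neg_sub, legendreSym_neg_of_mod_four_eq_three hp]
  have hsize : Even (Fintype.card (Fin (n + 1))) := by
    rw [Fintype.card_fin]
    exact ⟨(p + 1) / 4, by omega⟩
  exact sum_entries_eq_zero_of_transpose_eq_neg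
    (adjugate_transpose_eq_neg_of_transpose_eq_neg hC hsize)
end

section
/- Let p be a prime with p ≡ 3 (mod 4), let n = (p-1)/2, and let C be the (n+1)×(n+1) matrix with entries ((j-i)/p) for 0 ≤ i,j ≤ n. For any integers k, l with 0 ≤ k ≤ (p-3)/4 and 0 ≤ l ≤ n, the cofactors satisfy C_{k,l} + C_{n-k,n-l} = 0, where C_{k,l} = (-1)^{k+l} times the (k,l) minor of C. -/
open Matrix

theorem cofactor_pair_zero (p : ℕ) [Fact p.Prime] (hp : p % 4 = 3) :
    let n := (p - 1) / 2
    let C : Matrix (Fin (n + 1)) (Fin (n + 1)) ℤ :=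
      Matrix.of fun i j => legendreSym p ((j : ℤ) - (i : ℤ))
    ∀ k l : Fin (n + 1), (k : ℕ) ≤ (p - 3) / 4 →
      (-1 : ℤ) ^ ((k : ℕ) + (l : ℕ)) *
          (C.submatrix k.succAbove l.succAbove).det +
        (-1 : ℤ) ^ ((k.rev : ℕ) + (l.rev : ℕ)) *
          (C.submatrix k.rev.succAbove l.rev.succAbove).det = 0 := by
  intro n C k l _
  have hp2 : p ≠ 2 := by omega
  have hneg : ∀ a : ℤ, legendreSym p (-a) = - legendreSym p a := by
    intro a
    have h1 : legendreSym p (-1) = -1 := by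
      rw [legendreSym.at_neg_one hp2, ZMod.χ₄_nat_three_mod_four hp]
    calc legendreSym p (-a) = legendreSym p (-1 * a) := by ring_nf
    _ = legendreSym p (-1) * legendreSym p a := legendreSym.mul p _ _
    _ = - legendreSym p a := by rw [h1]; ring
  -- entries flip sign under double reversal
  have hC : ∀ i j : Fin (n + 1), C i.rev j.rev = - C i j := by
    intro i j
    have hi : ((i.rev : ℕ) : ℤ) = (n : ℤ) - (i : ℕ) := by
      have := Fin.is_le i
      simp [Fin.val_rev]
      omega
    have hj : ((j.rev : ℕ) : ℤ) = (n : ℤ) - (j : ℕ) := by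
      have := Fin.is_le j
      simp [Fin.val_rev]
      omega
    show legendreSym p (((j.rev : ℕ) : ℤ) - ((i.rev : ℕ) : ℤ))
        = - legendreSym p (((j : ℕ) : ℤ) - ((i : ℕ) : ℤ))
    rw [hi, hj, show ((n : ℤ) - (j : ℕ)) - ((n : ℤ) - (i : ℕ))
        = -(((j : ℕ) : ℤ) - ((i : ℕ) : ℤ)) by ring, hneg]
  have hsub : C.submatrix k.rev.succAbove l.rev.succAbove
      = (-(C.submatrix k.succAbove l.succAbove)).submatrix Fin.rev Fin.rev := by
    ext i j
    have h1 : k.rev.succAbove i = (k.succAbove i.rev).rev := by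
      rw [Fin.rev_succAbove, Fin.rev_rev]
    have h2 : l.rev.succAbove j = (l.succAbove j.rev).rev := by
      rw [Fin.rev_succAbove, Fin.rev_rev]
    simp only [Matrix.submatrix_apply, Matrix.neg_apply, h1, h2, hC]
  have hdet : (C.submatrix k.rev.succAbove l.rev.succAbove).det
      = (-1 : ℤ) ^ n * (C.submatrix k.succAbove l.succAbove).det := by
    rw [hsub, show (Fin.rev : Fin n → Fin n) = ⇑Fin.revPerm from rfl,
      Matrix.det_submatrix_equiv_self, Matrix.det_neg]
    simp
  have hnodd : (-1 : ℤ) ^ n = -1 := by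
    have hn : n % 2 = 1 := by
      have hpl : 2 ≤ p := Nat.Prime.two_le (Fact.out)
      omega
    rw [← Nat.div_add_mod n 2, pow_add, pow_mul]
    simp [hn]
  have hsign : (-1 : ℤ) ^ ((k.rev : ℕ) + (l.rev : ℕ)) = (-1 : ℤ) ^ ((k : ℕ) + (l : ℕ)) := by
    have hk := Fin.is_le k
    have hl := Fin.is_le l
    have hk' : (k.rev : ℕ) = n - (k : ℕ) := by simp [Fin.val_rev]
    have hl' : (l.rev : ℕ) = n - (l : ℕ) := by simp [Fin.val_rev]
    rcases Nat.even_or_odd ((k : ℕ) + (l : ℕ)) with h | h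
    · have h' : Even ((k.rev : ℕ) + (l.rev : ℕ)) := by
        rcases h with ⟨m, hm⟩
        exact ⟨n - m, by omega⟩
      rw [Even.neg_one_pow h, Even.neg_one_pow h']
    · have h' : Odd ((k.rev : ℕ) + (l.rev : ℕ)) := by
        rcases h with ⟨m, hm⟩
        exact ⟨n - m - 1, by omega⟩
      rw [Odd.neg_one_pow h, Odd.neg_one_pow h']
  rw [hdet, hsign, hnodd]
  ring
end

section
/- Let u_1,...,u_m and v_1,...,v_m be complex numbers with u_i v_j ≠ -1 for all i,j. Then det[(u_i + v_j)/(1 + u_i v_j)]_{1≤i,j≤m} = (1/2)·(∏_{i=1}^m (1+u_i)(1+v_i) + (-1)^m ∏_{i=1}^m (1-u_i)(1-v_i)) · ∏_{1≤i<j≤m} (u_i - u_j)(v_j - v_i) · ∏_{i=1}^m ∏_{j=1}^m (1 + u_i v_j)^{-1}. -/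
/-!
Write `M = [(u i + v j) / (1 + u i v j)]` and `J` for the all-ones matrix. Since `det` is affine
along a matrix with constant rows, `det (M + J) + det (M - J) = 2 det M`. Both `M + J` and
`-(M - J)` are diagonal rescalings of the Cauchy-like matrix `[(1 + u i v j)⁻¹]`, with row and
column factors `1 ± u i`, `1 ± v j`. The determinant of that matrix is computed by induction,
pivoting on its `(0, 0)` entry: the Schur complement is again a rescaled Cauchy-like matrix.
-/

open Matrix Finset

namespace Matrix

section ReplicateRow

variable {R n : Type*} [CommRing R] [Fintype n] [DecidableEq n]

theorem det_add_replicateRow (M : Matrix n n R) (w : n → R) (k : n) :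
    (M + replicateRow n w).det = M.det + ((M - replicateRow n (M k)).updateRow k w).det := by
  -- subtracting row `k` from every other row leaves the rows `M i - M k` and, at `k`, `M k + w`
  have key : ∀ w : n → R,
      (M + replicateRow n w).det = ((M - replicateRow n (M k)).updateRow k (M k + w)).det :=
    fun w => det_eq_of_forall_row_eq_smul_add_const (fun i => if i = k then 0 else 1) k
      (if_pos rfl) fun i j => by
        by_cases hi : i = k
        · simp [hi]
        · simp [hi]; ring
  have hM := key 0
  rw [replicateRow_zero, add_zero, add_zero] at hM
  rw [key, det_updateRow_add, ← hM]

theorem det_add_replicateRow_add_det_sub_replicateRow (M : Matrix n n R) (w : n → R) :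
    (M + replicateRow n w).det + (M - replicateRow n w).det = 2 * M.det := by
  cases isEmpty_or_nonempty n
  · simp only [det_isEmpty]; norm_num
  inhabit n
  have hsub : M - replicateRow n w = M + replicateRow n ((-1 : R) • w) := by
    rw [replicateRow_smul, neg_one_smul, sub_eq_add_neg]
  rw [hsub, det_add_replicateRow _ _ default, det_add_replicateRow _ _ default,
    det_updateRow_smul]
  ring

end ReplicateRow

section CauchyLike

variable {K : Type*} [Field K]

theorem det_succ_eq_mul_det_schur {n : ℕ} (A : Matrix (Fin (n + 1)) (Fin (n + 1)) K)
    (h : A 0 0 ≠ 0) :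
    A.det = A 0 0 *
      (of fun i j : Fin n => A i.succ j.succ - A i.succ 0 * (A 0 0)⁻¹ * A 0 j.succ).det := by
  set c : Fin (n + 1) → K := Fin.cons 0 fun i => A i.succ 0 * (A 0 0)⁻¹
  set B : Matrix (Fin (n + 1)) (Fin (n + 1)) K := of fun i j => A i j - c i * A 0 j
  have hB : A.det = B.det :=
    det_eq_of_forall_row_eq_smul_add_const c 0 rfl fun i j => by simp [B, c]
  rw [hB, det_succ_column_zero, Fin.sum_univ_succ, Finset.sum_eq_zero]
  · simp [B, c, submatrix]
  · intro i _
    simp [B, c, h]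

theorem inv_one_add_mul_sub_inv_mul_mul_inv (a b c d : K) (had : 1 + a * d ≠ 0)
    (hbc : 1 + b * c ≠ 0) (hbd : 1 + b * d ≠ 0) :
    (1 + b * d)⁻¹ - (1 + b * c)⁻¹ * (1 + a * c) * (1 + a * d)⁻¹ =
      (a - b) * (1 + b * c)⁻¹ * ((d - c) * (1 + a * d)⁻¹ * (1 + b * d)⁻¹) := by
  rw [eq_comm, ← sub_eq_zero]
  field_simp
  ring

theorem det_inv_one_add_mul {n : ℕ} (x y : Fin n → K) (h : ∀ i j, 1 + x i * y j ≠ 0) :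
    (of fun i j => (1 + x i * y j)⁻¹).det =
      (∏ i, ∏ j ∈ Ioi i, (x i - x j) * (y j - y i)) * ∏ i, ∏ j, (1 + x i * y j)⁻¹ := by
  induction n with
  | zero => simp
  | succ n ih =>
    have hschur : (of fun i j : Fin n => (1 + x i.succ * y j.succ)⁻¹ -
          (1 + x i.succ * y 0)⁻¹ * (1 + x 0 * y 0) * (1 + x 0 * y j.succ)⁻¹) =
        of fun i j => ((x 0 - x i.succ) * (1 + x i.succ * y 0)⁻¹) *
          of (fun i j => ((y j.succ - y 0) * (1 + x 0 * y j.succ)⁻¹) *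
            of (fun i j => (1 + x i.succ * y j.succ)⁻¹) i j) i j := by
      ext i j
      exact inv_one_add_mul_sub_inv_mul_mul_inv _ _ _ _ (h _ _) (h _ _) (h _ _)
    rw [det_succ_eq_mul_det_schur _ (inv_ne_zero (h 0 0))]
    simp only [of_apply, inv_inv]
    rw [hschur, det_mul_column, det_mul_row,
      ih (fun i => x i.succ) (fun j => y j.succ) fun i j => h _ _]
    simp only [Fin.prod_univ_succ, Fin.prod_Ioi_zero, Fin.prod_Ioi_succ, prod_mul_distrib]
    ring

end CauchyLike

end Matrix

theorem cauchy_like_det_general (m : ℕ) (u v : Fin m → ℂ)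
    (h : ∀ i j, u i * v j ≠ -1) :
    (Matrix.of fun i j : Fin m => (u i + v j) / (1 + u i * v j)).det =
      (1 / 2) *
        (∏ i, (1 + u i) * (1 + v i) + (-1 : ℂ) ^ m * ∏ i, (1 - u i) * (1 - v i)) *
        (∏ i, ∏ j ∈ Ioi i, (u i - u j) * (v j - v i)) *
        ∏ i, ∏ j, (1 + u i * v j)⁻¹ := by
  have hK : ∀ i j, 1 + u i * v j ≠ 0 := fun i j h0 => h i j (by linear_combination h0)
  set M := of fun i j : Fin m => (u i + v j) / (1 + u i * v j)
  set K := of fun i j : Fin m => (1 + u i * v j)⁻¹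
  have hplus : M + replicateRow (Fin m) 1 =
      of fun i j => (1 + u i) * of (fun i j => (1 + v j) * K i j) i j := by
    ext i j
    have := hK i j
    simp only [M, K, Matrix.add_apply, of_apply, replicateRow_apply, Pi.one_apply]
    field_simp
    ring
  have hminus : M - replicateRow (Fin m) 1 =
      -of fun i j => (1 - u i) * of (fun i j => (1 - v j) * K i j) i j := by
    ext i j
    have := hK i j
    simp only [M, K, Matrix.sub_apply, Matrix.neg_apply, of_apply, replicateRow_apply,
      Pi.one_apply]
    field_simp
    ring
  have hsum := det_add_replicateRow_add_det_sub_replicateRow M 1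
  rw [hplus, hminus, det_neg, Fintype.card_fin, det_mul_column, det_mul_row, det_mul_column,
    det_mul_row, det_inv_one_add_mul u v hK] at hsum
  rw [prod_mul_distrib, prod_mul_distrib]
  linear_combination (-1 / 2 : ℂ) * hsum

theorem cauchy_like_det (m : ℕ) (hm : 0 < m) (u v : Fin m → ℂ)
    (h : ∀ i j, u i * v j ≠ -1) :
    (Matrix.of fun i j : Fin m => (u i + v j) / (1 + u i * v j)).det =
      (1 / 2) *
        (∏ i, (1 + u i) * (1 + v i) + (-1 : ℂ) ^ m * ∏ i, (1 - u i) * (1 - v i)) *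
        (∏ i, ∏ j ∈ Ioi i, (u i - u j) * (v j - v i)) *
        ∏ i, ∏ j, (1 + u i * v j)⁻¹ :=
  cauchy_like_det_general m u v h
end

section
/- Let p be an odd prime, n = (p-1)/2, and ζ = e^{2πi/p}. Then ∏_{j=1}^{n} (1 + ζ^{2j}) = ζ^{n(n+1)/2} · (2/p), where (2/p) is the Legendre symbol of 2 modulo p. -/
/-!
Since `1 + ζ^(2j) = ζ^j (ζ^j + ζ^(-j))`, it suffices to show
`∏_{j=1}^{(p-1)/2} (ζ^j + ζ^(-j)) = (2/p)`.
For the odd function `σ(x) = ζ^x - ζ^(-x)` on `ZMod p`, the proof of Gauss's lemma gives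
`∏ σ(2x) = (2/p) ∏ σ(x)`: up to sign, `x ↦ 2x` permutes `{1, …, (p-1)/2}`, and the signs are
exactly those counted by Gauss's lemma. Dividing `σ(2x) = σ(x) (ζ^x + ζ^(-x))` by the nonzero
`∏ σ(x)` gives the claim.
-/

open Finset

section GaussLemma

variable {R : Type*} [CommRing R] {p : ℕ} [Fact p.Prime]

theorem prod_odd_comp_mul_eq_legendreSym_mul (hp : p ≠ 2) {f : ZMod p → R}
    (hf : ∀ x, f (-x) = -f x) {a : ℤ} (ha : (a : ZMod p) ≠ 0) :
    ∏ x ∈ Icc 1 (p / 2), f (a * x) = legendreSym p a * ∏ x ∈ Icc 1 (p / 2), f x := by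
  have hsign (y : ZMod p) :
      f y = (if y.val ≤ p / 2 then 1 else -1) * f (y.valMinAbs.natAbs) := by
    rw [ZMod.natCast_natAbs_valMinAbs]
    split_ifs <;> simp [hf]
  have hperm : ∏ x ∈ Icc 1 (p / 2), f ((a * x : ZMod p).valMinAbs.natAbs) =
      ∏ x ∈ Icc 1 (p / 2), f x := by
    have h := ZMod.Ico_map_valMinAbs_natAbs_eq_Ico_map_id p a ha
    rw [Nat.succ_eq_add_one, Ico_add_one_right_eq_Icc] at h
    have h' := congrArg (fun s => (s.map fun m : ℕ => f m).prod) h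
    simp only [Multiset.map_map, Function.comp_def] at h'
    simpa only [prod_eq_multiset_prod] using h'
  rw [prod_congr rfl fun x _ => hsign _, prod_mul_distrib, hperm, prod_ite, prod_const_one,
    prod_const, one_mul, ZMod.gauss_lemma hp ha, Nat.succ_eq_add_one, Ico_add_one_right_eq_Icc]
  simp only [not_le, Int.cast_pow, Int.cast_neg, Int.cast_one]

end GaussLemma

theorem sum_Icc_one_id (m : ℕ) : ∑ j ∈ Icc 1 m, j = m * (m + 1) / 2 := by
  have h := sum_range_id (m + 1)
  rw [range_eq_Ico, sum_eq_sum_Ico_succ_bot (by omega : 0 < m + 1), Ico_add_one_right_eq_Icc] at h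
  simpa [mul_comm] using h

section RootOfUnity

variable {R : Type*} [CommRing R] {p : ℕ} {ζ : R}

theorem pow_val_add [NeZero p] (h : ζ ^ p = 1) (x y : ZMod p) :
    ζ ^ (x + y).val = ζ ^ x.val * ζ ^ y.val := by
  rw [ZMod.val_add, ← pow_eq_pow_mod _ h, pow_add]

theorem pow_val_natCast (h : ζ ^ p = 1) (j : ℕ) : ζ ^ (j : ZMod p).val = ζ ^ j := by
  rw [ZMod.val_natCast, ← pow_eq_pow_mod _ h]

theorem one_add_pow_two_mul [NeZero p] (h : ζ ^ p = 1) (j : ℕ) :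
    1 + ζ ^ (2 * j) = ζ ^ j * (ζ ^ (j : ZMod p).val + ζ ^ (-(j : ZMod p)).val) := by
  have hinv : ζ ^ j * ζ ^ (-(j : ZMod p)).val = 1 := by
    rw [← pow_val_natCast h j, ← pow_val_add h, add_neg_cancel, ZMod.val_zero, pow_zero]
  rw [pow_val_natCast h, mul_add, hinv, ← pow_add, ← two_mul, add_comm]

theorem pow_val_sub_pow_val_neg_two_mul [NeZero p] (h : ζ ^ p = 1) (x : ZMod p) :
    ζ ^ (2 * x).val - ζ ^ (-(2 * x)).val =
      (ζ ^ x.val - ζ ^ (-x).val) * (ζ ^ x.val + ζ ^ (-x).val) := by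
  rw [two_mul, neg_add, pow_val_add h, pow_val_add h]
  ring

theorem IsPrimitiveRoot.pow_val_sub_pow_val_neg_ne_zero [Fact p.Prime] (hζ : IsPrimitiveRoot ζ p)
    (hp : p ≠ 2) {x : ZMod p} (hx : x ≠ 0) : ζ ^ x.val - ζ ^ (-x).val ≠ 0 := by
  intro h
  have hval := hζ.pow_inj (ZMod.val_lt x) (ZMod.val_lt (-x)) (sub_eq_zero.mp h)
  have hodd : p % 2 = 1 := Nat.odd_iff.mp ((Fact.out : p.Prime).odd_of_ne_two hp)
  rcases (ZMod.neg_eq_self_iff x).mp (ZMod.val_injective p hval).symm with hx0 | h2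
  · exact hx hx0
  · omega

theorem IsPrimitiveRoot.prod_pow_val_add_pow_val_neg [IsDomain R] [Fact p.Prime]
    (hζ : IsPrimitiveRoot ζ p) (hp : p ≠ 2) :
    ∏ x ∈ Icc 1 (p / 2), (ζ ^ (x : ZMod p).val + ζ ^ (-(x : ZMod p)).val) = legendreSym p 2 := by
  set σ : ZMod p → R := fun x => ζ ^ x.val - ζ ^ (-x).val
  have hσ_odd (x : ZMod p) : σ (-x) = -σ x := by simp only [σ, neg_neg, neg_sub]
  have htwo : ((2 : ℤ) : ZMod p) ≠ 0 := by
    intro h0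
    have h2 : p ∣ 2 := by exact_mod_cast (ZMod.intCast_zmod_eq_zero_iff_dvd 2 p).mp h0
    exact hp ((Nat.prime_dvd_prime_iff_eq Fact.out Nat.prime_two).mp h2)
  have hσ_prod : ∏ x ∈ Icc 1 (p / 2), σ x ≠ 0 := by
    refine prod_ne_zero_iff.mpr fun x hx => hζ.pow_val_sub_pow_val_neg_ne_zero hp ?_
    rw [Ne, ZMod.natCast_eq_zero_iff]
    exact Nat.not_dvd_of_pos_of_lt (mem_Icc.mp hx).1 (by grind)
  have key := prod_odd_comp_mul_eq_legendreSym_mul hp hσ_odd htwo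
  simp only [Int.cast_ofNat, σ, pow_val_sub_pow_val_neg_two_mul hζ.pow_eq_one,
    prod_mul_distrib] at key
  exact mul_left_cancel₀ hσ_prod (key.trans (mul_comm _ _))

theorem IsPrimitiveRoot.prod_one_add_pow_two_mul [IsDomain R] [Fact p.Prime]
    (hζ : IsPrimitiveRoot ζ p) (hp : p ≠ 2) :
    ∏ j ∈ Icc 1 (p / 2), (1 + ζ ^ (2 * j)) = ζ ^ (p / 2 * (p / 2 + 1) / 2) * legendreSym p 2 := by
  rw [prod_congr rfl fun j _ => one_add_pow_two_mul hζ.pow_eq_one j, prod_mul_distrib,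
    prod_pow_eq_pow_sum, sum_Icc_one_id, hζ.prod_pow_val_add_pow_val_neg hp]

end RootOfUnity

theorem prod_one_add_zeta (p : ℕ) [Fact p.Prime] (hp : p ≠ 2) :
    let n := (p - 1) / 2
    let ζ : ℂ := Complex.exp (2 * Real.pi * Complex.I / p)
    ∏ j ∈ Icc 1 n, (1 + ζ ^ (2 * j)) = ζ ^ (n * (n + 1) / 2) * legendreSym p 2 := by
  intro n ζ
  have hn : n = p / 2 := by
    have := Nat.odd_iff.mp ((Fact.out : p.Prime).odd_of_ne_two hp)
    omega
  rw [hn]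
  exact (Complex.isPrimitiveRoot_exp p (Fact.out : p.Prime).ne_zero).prod_one_add_pow_two_mul hp
end

section
/- Let p be an odd prime, n = (p-1)/2, and let A be any (n+1)×(n+1) matrix with entries A[i][j] = f(j-i) for 0 ≤ i,j ≤ n, where f: ℤ → ℂ is an odd function (f(-k) = -f(k)) that is periodic mod p. If p ≡ 3 (mod 4), then for all 0 ≤ k,l ≤ n the minors satisfy M_{n-k,n-l} = -M_{k,l}, where M_{i,j} is the determinant of the submatrix of A obtained by deleting row i and column j. -/
/-!
Reversing the order of rows and columns negates the Toeplitz matrix of an odd function, and it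
turns the minor at `(k, l)` into the minor at `(n - k, n - l)` with its rows and columns reversed,
which does not change the determinant. Hence `M_{n-k,n-l} = (-1)^n M_{k,l}`, and `n` is odd.
-/

namespace Matrix

variable {R : Type*} {m : ℕ}

def toeplitz (f : ℤ → R) : Matrix (Fin m) (Fin m) R :=
  of fun i j => f ((j : ℤ) - i)

theorem toeplitz_submatrix_rev [Neg R] {f : ℤ → R} (hodd : ∀ k, f (-k) = -f k) :
    (toeplitz f : Matrix (Fin m) (Fin m) R).submatrix Fin.rev Fin.rev = -toeplitz f := by
  ext i j
  have hrev : ∀ a : Fin m, ((a.rev : ℕ) : ℤ) = m - 1 - a := fun a => by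
    have := a.is_lt
    rw [Fin.val_rev]
    omega
  simp only [toeplitz, submatrix_apply, of_apply, neg_apply, hrev, ← hodd]
  ring_nf

theorem submatrix_rev_succAbove_rev (A : Matrix (Fin (m + 1)) (Fin (m + 1)) R)
    (k l : Fin (m + 1)) :
    A.submatrix k.rev.succAbove l.rev.succAbove =
      ((A.submatrix Fin.rev Fin.rev).submatrix k.succAbove l.succAbove).submatrix
        Fin.rev Fin.rev := by
  ext i j
  simp [Fin.succAbove_rev_left]

variable [CommRing R]

theorem det_submatrix_rev (B : Matrix (Fin m) (Fin m) R) :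
    (B.submatrix Fin.rev Fin.rev).det = B.det :=
  det_submatrix_equiv_self Fin.revPerm B

theorem det_submatrix_rev_succAbove_of_submatrix_rev_eq_neg
    {A : Matrix (Fin (m + 1)) (Fin (m + 1)) R} (hA : A.submatrix Fin.rev Fin.rev = -A)
    (k l : Fin (m + 1)) :
    (A.submatrix k.rev.succAbove l.rev.succAbove).det =
      (-1) ^ m * (A.submatrix k.succAbove l.succAbove).det := by
  rw [submatrix_rev_succAbove_rev, det_submatrix_rev, hA, submatrix_neg, Pi.neg_apply, Pi.neg_apply,
    det_neg, Fintype.card_fin]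

end Matrix

open Matrix

theorem Nat.odd_div_two_of_mod_four_eq_three {p : ℕ} (hp : p % 4 = 3) : Odd ((p - 1) / 2) :=
  Nat.odd_iff.mpr (by omega)

theorem minor_antisymm_general (p : ℕ) (hp3 : p % 4 = 3)
    (f : ℤ → ℂ) (hodd : ∀ k, f (-k) = -f k) :
    let n := (p - 1) / 2
    let A : Matrix (Fin (n + 1)) (Fin (n + 1)) ℂ :=
      Matrix.of fun i j => f ((j : ℤ) - (i : ℤ))
    ∀ k l : Fin (n + 1),
      (A.submatrix k.rev.succAbove l.rev.succAbove).det =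
        -(A.submatrix k.succAbove l.succAbove).det := by
  intro n A k l
  have hA : A.submatrix Fin.rev Fin.rev = -A := toeplitz_submatrix_rev hodd
  rw [det_submatrix_rev_succAbove_of_submatrix_rev_eq_neg hA k l,
    (Nat.odd_div_two_of_mod_four_eq_three hp3).neg_one_pow, neg_one_mul]

theorem minor_antisymm (p : ℕ) (hp : p.Prime) (hp3 : p % 4 = 3)
    (f : ℤ → ℂ) (hodd : ∀ k, f (-k) = -f k) (hper : ∀ k, f (k + p) = f k) :
    let n := (p - 1) / 2
    let A : Matrix (Fin (n + 1)) (Fin (n + 1)) ℂ :=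
      Matrix.of fun i j => f ((j : ℤ) - (i : ℤ))
    ∀ k l : Fin (n + 1),
      (A.submatrix k.rev.succAbove l.rev.succAbove).det =
        -(A.submatrix k.succAbove l.succAbove).det :=
  minor_antisymm_general p hp3 f hodd
end
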